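/- Let L ≥ 2 be an integer, N = 2^L, and let A ∈ ℂ^{N×N} be a butterfly matrix, i.e., A = X_1 X_2 ⋯ X_L with supp(X_ℓ) ⊆ supp(S_ℓ) for every ℓ ∈ {1,…,L}, where S_ℓ := I_{2^{ℓ−1}} ⊗ J_2 ⊗ I_{N/2^ℓ}. Then A satisfies the complementary low-rank property of rank 1 for the canonical partitions: for every ℓ ∈ {1,…,L−1}, every i ∈ {1,…,N/2^ℓ}, and every j ∈ {1,…,2^ℓ}, the submatrix A_{R^(ℓ)_i, C^(ℓ)_j} has rank at most 1. -/

import Mathlib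

open Matrix Kronecker

/-- The `n × n` all-ones matrix `J_n`. -/
def Jmat (n : ℕ) : Matrix (Fin n) (Fin n) ℂ := Matrix.of fun _ _ => 1

lemma two_pow_div (L ℓ : ℕ) (h : ℓ ≤ L) : 2 ^ L / 2 ^ ℓ = 2 ^ (L - ℓ) :=
  Nat.pow_div h (by norm_num)

lemma two_pow_mul_div (L ℓ : ℕ) (h : ℓ ≤ L) : 2 ^ ℓ * (2 ^ L / 2 ^ ℓ) = 2 ^ L :=
  Nat.mul_div_cancel' (pow_dvd_pow 2 h)

lemma bfly_dim (L ℓ : ℕ) (h1 : 1 ≤ ℓ) (h2 : ℓ ≤ L) :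
    2 ^ (ℓ - 1) * (2 * (2 ^ L / 2 ^ ℓ)) = 2 ^ L := by
  rw [two_pow_div L ℓ h2, show (2 : ℕ) * 2 ^ (L - ℓ) = 2 ^ (L - ℓ + 1) by rw [pow_succ]; ring,
    ← pow_add]
  congr 1
  omega

/-- Reindexing equivalence `Fin 2^(ℓ-1) × (Fin 2 × Fin (2^L/2^ℓ)) ≃ Fin 2^L`,
sending `(a, (b, c))` to the lexicographic index `a·(2·2^L/2^ℓ) + b·(2^L/2^ℓ) + c`. -/
def bflyEquiv (L ℓ : ℕ) (h1 : 1 ≤ ℓ) (h2 : ℓ ≤ L) :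
    Fin (2 ^ (ℓ - 1)) × (Fin 2 × Fin (2 ^ L / 2 ^ ℓ)) ≃ Fin (2 ^ L) :=
  ((Equiv.refl _).prodCongr finProdFinEquiv).trans
    (finProdFinEquiv.trans (finCongr (bfly_dim L ℓ h1 h2)))

/-- The butterfly support `S_ℓ = I_{2^{ℓ-1}} ⊗ J_2 ⊗ I_{N/2^ℓ}`, as an `N × N` matrix,
`N = 2^L`. -/
def bflySupp (L ℓ : ℕ) (h1 : 1 ≤ ℓ) (h2 : ℓ ≤ L) : Matrix (Fin (2 ^ L)) (Fin (2 ^ L)) ℂ :=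
  Matrix.reindex (bflyEquiv L ℓ h1 h2) (bflyEquiv L ℓ h1 h2)
    ((1 : Matrix (Fin (2 ^ (ℓ - 1))) (Fin (2 ^ (ℓ - 1))) ℂ) ⊗ₖ
      (Jmat 2 ⊗ₖ (1 : Matrix (Fin (2 ^ L / 2 ^ ℓ)) (Fin (2 ^ L / 2 ^ ℓ)) ℂ)))

/-- Reindexing equivalence `Fin 2^ℓ × Fin (2^L/2^ℓ) ≃ Fin 2^L` (lexicographic). -/
def blockEquiv (L ℓ : ℕ) (h : ℓ ≤ L) : Fin (2 ^ ℓ) × Fin (2 ^ L / 2 ^ ℓ) ≃ Fin (2 ^ L) :=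
  finProdFinEquiv.trans (finCongr (two_pow_mul_div L ℓ h))

/-- The matrix `J_{2^ℓ} ⊗ I_{N/2^ℓ}`, as an `N × N` matrix, `N = 2^L`. -/
def JkronI (L ℓ : ℕ) (h : ℓ ≤ L) : Matrix (Fin (2 ^ L)) (Fin (2 ^ L)) ℂ :=
  Matrix.reindex (blockEquiv L ℓ h) (blockEquiv L ℓ h)
    (Jmat (2 ^ ℓ) ⊗ₖ (1 : Matrix (Fin (2 ^ L / 2 ^ ℓ)) (Fin (2 ^ L / 2 ^ ℓ)) ℂ))

/-- The matrix `I_{2^ℓ} ⊗ J_{N/2^ℓ}`, as an `N × N` matrix, `N = 2^L`. -/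
def IkronJ (L ℓ : ℕ) (h : ℓ ≤ L) : Matrix (Fin (2 ^ L)) (Fin (2 ^ L)) ℂ :=
  Matrix.reindex (blockEquiv L ℓ h) (blockEquiv L ℓ h)
    ((1 : Matrix (Fin (2 ^ ℓ)) (Fin (2 ^ ℓ)) ℂ) ⊗ₖ Jmat (2 ^ L / 2 ^ ℓ))

/-- The `k`-th element of the canonical row index set `R^(ℓ)_i` (0-based):
`i + k·(N/2^ℓ)`, for `i ∈ Fin (N/2^ℓ)`, `k ∈ Fin 2^ℓ`, `N = 2^L`. -/
def rowIdx (L ℓ : ℕ) (h : ℓ ≤ L) (i : Fin (2 ^ L / 2 ^ ℓ)) (k : Fin (2 ^ ℓ)) : Fin (2 ^ L) :=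
  ⟨(i : ℕ) + (k : ℕ) * (2 ^ L / 2 ^ ℓ), by
    have hi := i.isLt
    have hk := k.isLt
    calc (i : ℕ) + (k : ℕ) * (2 ^ L / 2 ^ ℓ)
        < 2 ^ L / 2 ^ ℓ + (k : ℕ) * (2 ^ L / 2 ^ ℓ) := by omega
      _ = ((k : ℕ) + 1) * (2 ^ L / 2 ^ ℓ) := by ring
      _ ≤ 2 ^ ℓ * (2 ^ L / 2 ^ ℓ) := Nat.mul_le_mul_right _ (by omega)
      _ = 2 ^ L := two_pow_mul_div L ℓ h⟩

/-- The `k`-th element of the canonical column index set `C^(ℓ)_j` (0-based):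
`j·(N/2^ℓ) + k`, for `j ∈ Fin 2^ℓ`, `k ∈ Fin (N/2^ℓ)`, `N = 2^L`. -/
def colIdx (L ℓ : ℕ) (h : ℓ ≤ L) (j : Fin (2 ^ ℓ)) (k : Fin (2 ^ L / 2 ^ ℓ)) : Fin (2 ^ L) :=
  ⟨(j : ℕ) * (2 ^ L / 2 ^ ℓ) + (k : ℕ), by
    have hj := j.isLt
    have hk := k.isLt
    calc (j : ℕ) * (2 ^ L / 2 ^ ℓ) + (k : ℕ)
        < (j : ℕ) * (2 ^ L / 2 ^ ℓ) + (2 ^ L / 2 ^ ℓ) := by omega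
      _ = ((j : ℕ) + 1) * (2 ^ L / 2 ^ ℓ) := by ring
      _ ≤ 2 ^ ℓ * (2 ^ L / 2 ^ ℓ) := Nat.mul_le_mul_right _ (by omega)
      _ = 2 ^ L := two_pow_mul_div L ℓ h⟩

/-- The squared Frobenius norm `‖A‖_F²` of a complex matrix. -/
noncomputable def frobSq {m n : Type*} [Fintype m] [Fintype n] (A : Matrix m n ℂ) : ℝ :=
  ∑ i, ∑ j, ‖A i j‖ ^ 2

/-!
Split `A = B * C` with `B = X_1 ⋯ X_ℓ` and `C = X_{ℓ+1} ⋯ X_L`, and put `Q = N / 2^ℓ`. A factor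
supported on `S_p` only connects indices `a, b` with `a ≡ b (mod N / 2^p)` and
`⌊a / (N / 2^(p-1))⌋ = ⌊b / (N / 2^(p-1))⌋`. Hence `B` only connects indices congruent modulo `Q`,
and `C` only connects indices with the same quotient by `Q`. The rows of `R^(ℓ)_i` are all `≡ i`
and the columns of `C^(ℓ)_j` all have quotient `j`, so in `A_{rc} = ∑_m B_{rm} C_{mc}` only
`m = j Q + i` contributes: the block is the outer product of a column of `B` and a row of `C`.
-/

namespace Matrix

def IsBlockDiagonalWrt {n α R : Type*} [Zero R] (f : n → α) (M : Matrix n n R) : Prop :=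
  ∀ a b, M a b ≠ 0 → f a = f b

namespace IsBlockDiagonalWrt

variable {n α R : Type*} {f : n → α}

lemma mono {β : Type*} {g : n → β} [Zero R] {M : Matrix n n R} (hM : M.IsBlockDiagonalWrt f)
    (hfg : ∀ a b, f a = f b → g a = g b) : M.IsBlockDiagonalWrt g :=
  fun a b hab => hfg a b (hM a b hab)

lemma of_support_subset [Zero R] {M S : Matrix n n R} (hS : S.IsBlockDiagonalWrt f)
    (hMS : ∀ a b, M a b ≠ 0 → S a b ≠ 0) : M.IsBlockDiagonalWrt f :=
  fun a b hab => hS a b (hMS a b hab)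

lemma one [DecidableEq n] [Zero R] [One R] : (1 : Matrix n n R).IsBlockDiagonalWrt f := by
  intro a b hab
  rw [of_not_not fun hne => hab (one_apply_ne hne)]

lemma mul [Fintype n] [NonUnitalNonAssocSemiring R] {M N : Matrix n n R}
    (hM : M.IsBlockDiagonalWrt f) (hN : N.IsBlockDiagonalWrt f) :
    (M * N).IsBlockDiagonalWrt f := by
  intro a b hab
  obtain ⟨m, -, hm⟩ := Finset.exists_ne_zero_of_sum_ne_zero hab
  exact (hM a m (left_ne_zero_of_mul hm)).trans (hN m b (right_ne_zero_of_mul hm))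

lemma list_prod [Fintype n] [DecidableEq n] [Semiring R] {l : List (Matrix n n R)}
    (hl : ∀ M ∈ l, M.IsBlockDiagonalWrt f) : l.prod.IsBlockDiagonalWrt f := by
  induction l with
  | nil => exact one
  | cons M l ih =>
    rw [List.forall_mem_cons] at hl
    exact hl.1.mul (ih hl.2)

end IsBlockDiagonalWrt

lemma rank_submatrix_mul_le_one {n ι κ α β R : Type*} [Fintype n] [Fintype κ] [CommRing R]
    [StrongRankCondition R] {f : n → α} {g : n → β} {B C : Matrix n n R}
    (hB : B.IsBlockDiagonalWrt f) (hC : C.IsBlockDiagonalWrt g)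
    {rows : ι → n} {cols : κ → n} {i : α} {j : β} (hrows : ∀ k, f (rows k) = i)
    (hcols : ∀ k, g (cols k) = j) (m₀ : n) (hm₀ : ∀ m, f m = i → g m = j → m = m₀) :
    ((B * C).submatrix rows cols).rank ≤ 1 := by
  have hvec : (B * C).submatrix rows cols = vecMulVec (fun k => B (rows k) m₀)
      (fun k => C m₀ (cols k)) := by
    ext k k'
    -- the only term of `∑ m, B (rows k) m * C m (cols k')` that can survive is `m = m₀`
    refine Finset.sum_eq_single m₀ (fun m _ hm => ?_) (absurd (Finset.mem_univ m₀))
    by_contra hBC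
    exact hm (hm₀ m ((hB _ _ (left_ne_zero_of_mul hBC)).symm.trans (hrows k))
      ((hC _ _ (right_ne_zero_of_mul hBC)).trans (hcols k')))
  exact hvec ▸ rank_vecMulVec_le _ _

end Matrix

namespace List

variable {α : Type*} {n ℓ : ℕ} {f : Fin n → α} {a : α}

lemma exists_lt_of_mem_take_ofFn (h : a ∈ (ofFn f).take ℓ) :
    ∃ t : Fin n, (t : ℕ) < ℓ ∧ f t = a := by
  obtain ⟨t, ht, rfl⟩ := mem_iff_getElem.mp h
  simp only [length_take, length_ofFn, lt_min_iff] at ht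
  exact ⟨⟨t, ht.2⟩, ht.1, by simp⟩

lemma exists_le_of_mem_drop_ofFn (h : a ∈ (ofFn f).drop ℓ) :
    ∃ t : Fin n, ℓ ≤ (t : ℕ) ∧ f t = a := by
  obtain ⟨t, ht, rfl⟩ := mem_iff_getElem.mp h
  simp only [length_drop, length_ofFn] at ht
  exact ⟨⟨ℓ + t, by omega⟩, by simp, by simp⟩

end List

section Butterfly

variable {L p ℓ : ℕ}

lemma bflyEquiv_apply_mod (h1 : 1 ≤ p) (h2 : p ≤ L)
    (x : Fin (2 ^ (p - 1)) × (Fin 2 × Fin (2 ^ L / 2 ^ p))) :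
    (bflyEquiv L p h1 h2 x : ℕ) % (2 ^ L / 2 ^ p) = x.2.2 := by
  obtain ⟨a, b, c⟩ := x
  simp only [bflyEquiv, finProdFinEquiv, Equiv.trans_apply, Equiv.prodCongr_apply, Equiv.coe_refl,
    Equiv.coe_fn_mk, Prod.map_apply, id_eq, finCongr_apply, Fin.cast_mk]
  rw [mul_right_comm, Nat.add_mul_mod_self_right, Nat.add_mul_mod_self_left,
    Nat.mod_eq_of_lt c.isLt]

lemma bflyEquiv_apply_div (h1 : 1 ≤ p) (h2 : p ≤ L)
    (x : Fin (2 ^ (p - 1)) × (Fin 2 × Fin (2 ^ L / 2 ^ p))) :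
    (bflyEquiv L p h1 h2 x : ℕ) / (2 * (2 ^ L / 2 ^ p)) = x.1 := by
  obtain ⟨a, b, c⟩ := x
  simp only [bflyEquiv, finProdFinEquiv, Equiv.trans_apply, Equiv.prodCongr_apply, Equiv.coe_refl,
    Equiv.coe_fn_mk, Prod.map_apply, id_eq, finCongr_apply, Fin.cast_mk]
  have hb : (b : ℕ) ≤ 1 := Nat.le_of_lt_succ b.isLt
  have hlt : (c : ℕ) + 2 ^ L / 2 ^ p * b < 2 * (2 ^ L / 2 ^ p) := by nlinarith [c.isLt]
  rw [Nat.add_mul_div_left _ _ (by omega), Nat.div_eq_of_lt hlt, zero_add]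

lemma bflySupp_apply_ne_zero (h1 : 1 ≤ p) (h2 : p ≤ L) {x y}
    (h : bflySupp L p h1 h2 (bflyEquiv L p h1 h2 x) (bflyEquiv L p h1 h2 y) ≠ 0) :
    x.1 = y.1 ∧ x.2.2 = y.2.2 := by
  simpa [bflySupp, Jmat, one_apply, and_comm] using h

lemma bflySupp_isBlockDiagonalWrt_mod (h1 : 1 ≤ p) (h2 : p ≤ L) :
    (bflySupp L p h1 h2).IsBlockDiagonalWrt fun a : Fin (2 ^ L) => (a : ℕ) % (2 ^ L / 2 ^ p) := by
  intro a b hab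
  obtain ⟨x, rfl⟩ := (bflyEquiv L p h1 h2).surjective a
  obtain ⟨y, rfl⟩ := (bflyEquiv L p h1 h2).surjective b
  simp only [bflyEquiv_apply_mod, (bflySupp_apply_ne_zero h1 h2 hab).2]

lemma bflySupp_isBlockDiagonalWrt_div (h1 : 1 ≤ p) (h2 : p ≤ L) :
    (bflySupp L p h1 h2).IsBlockDiagonalWrt
      fun a : Fin (2 ^ L) => (a : ℕ) / (2 * (2 ^ L / 2 ^ p)) := by
  intro a b hab
  obtain ⟨x, rfl⟩ := (bflyEquiv L p h1 h2).surjective a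
  obtain ⟨y, rfl⟩ := (bflyEquiv L p h1 h2).surjective b
  simp only [bflyEquiv_apply_div, (bflySupp_apply_ne_zero h1 h2 hab).1]

lemma bflySupp_isBlockDiagonalWrt_mod_of_le (h1 : 1 ≤ p) (h2 : p ≤ L) (hpℓ : p ≤ ℓ)
    (hℓ : ℓ ≤ L) :
    (bflySupp L p h1 h2).IsBlockDiagonalWrt fun a : Fin (2 ^ L) => (a : ℕ) % (2 ^ L / 2 ^ ℓ) := by
  have hdvd : 2 ^ L / 2 ^ ℓ ∣ 2 ^ L / 2 ^ p := by
    rw [two_pow_div L ℓ hℓ, two_pow_div L p h2]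
    exact Nat.pow_dvd_pow 2 (by omega)
  refine (bflySupp_isBlockDiagonalWrt_mod h1 h2).mono fun a b hab => ?_
  rw [← Nat.mod_mod_of_dvd _ hdvd, hab, Nat.mod_mod_of_dvd _ hdvd]

lemma bflySupp_isBlockDiagonalWrt_div_of_lt (h1 : 1 ≤ p) (h2 : p ≤ L) (hℓp : ℓ < p) :
    (bflySupp L p h1 h2).IsBlockDiagonalWrt fun a : Fin (2 ^ L) => (a : ℕ) / (2 ^ L / 2 ^ ℓ) := by
  have hdvd : 2 * (2 ^ L / 2 ^ p) ∣ 2 ^ L / 2 ^ ℓ := by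
    rw [two_pow_div L ℓ (by omega), two_pow_div L p h2, ← pow_succ']
    exact Nat.pow_dvd_pow 2 (by omega)
  obtain ⟨k, hk⟩ := hdvd
  refine (bflySupp_isBlockDiagonalWrt_div h1 h2).mono fun a b hab => ?_
  simp only [hk, ← Nat.div_div_eq_div_mul _ (2 * (2 ^ L / 2 ^ p)) k, hab]

lemma rowIdx_mod (h : ℓ ≤ L) (i : Fin (2 ^ L / 2 ^ ℓ)) (k : Fin (2 ^ ℓ)) :
    (rowIdx L ℓ h i k : ℕ) % (2 ^ L / 2 ^ ℓ) = i :=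
  (Nat.add_mul_mod_self_right _ _ _).trans (Nat.mod_eq_of_lt i.isLt)

lemma colIdx_div (h : ℓ ≤ L) (j : Fin (2 ^ ℓ)) (k : Fin (2 ^ L / 2 ^ ℓ)) :
    (colIdx L ℓ h j k : ℕ) / (2 ^ L / 2 ^ ℓ) = j := by
  change ((j : ℕ) * (2 ^ L / 2 ^ ℓ) + k) / (2 ^ L / 2 ^ ℓ) = j
  rw [add_comm, Nat.add_mul_div_right _ _ k.pos, Nat.div_eq_of_lt k.isLt, zero_add]

lemma eq_colIdx_of_mod_of_div (h : ℓ ≤ L) {i : Fin (2 ^ L / 2 ^ ℓ)} {j : Fin (2 ^ ℓ)}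
    {m : Fin (2 ^ L)} (hi : (m : ℕ) % (2 ^ L / 2 ^ ℓ) = i) (hj : (m : ℕ) / (2 ^ L / 2 ^ ℓ) = j) :
    m = colIdx L ℓ h j i :=
  Fin.ext <| by
    change (m : ℕ) = j * (2 ^ L / 2 ^ ℓ) + i
    rw [← hi, ← hj, Nat.div_add_mod']

end Butterfly

/-- For `L ≥ 2`, `N = 2^L`: if `A = X_1 X_2 ⋯ X_L` is a butterfly matrix
(`supp(X_p) ⊆ supp(S_p)` for every `p ∈ {1,…,L}`), then `A` satisfies the complementary
low-rank property of rank `1` for the canonical partitions: for every `ℓ ∈ {1,…,L-1}` and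
all `i, j`, the submatrix `A_{R^(ℓ)_i, C^(ℓ)_j}` has rank at most `1`. -/
theorem butterfly_complementary_low_rank (L : ℕ)
    (X : Fin L → Matrix (Fin (2 ^ L)) (Fin (2 ^ L)) ℂ)
    (hX : ∀ p : Fin L, ∀ a b, X p a b ≠ 0 →
      bflySupp L ((p : ℕ) + 1) (by omega) (by have := p.isLt; omega) a b ≠ 0)
    (A : Matrix (Fin (2 ^ L)) (Fin (2 ^ L)) ℂ) (hA : A = (List.ofFn X).prod) :
    ∀ (ℓ : ℕ) (hℓ1 : 1 ≤ ℓ) (hℓ2 : ℓ ≤ L - 1)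
      (i : Fin (2 ^ L / 2 ^ ℓ)) (j : Fin (2 ^ ℓ)),
      (A.submatrix (rowIdx L ℓ (by omega) i) (colIdx L ℓ (by omega) j)).rank ≤ 1 := by
  intro ℓ _ hℓ2 i j
  have hℓ : ℓ ≤ L := by omega
  rw [hA, ← List.take_append_drop ℓ (List.ofFn X), List.prod_append]
  refine rank_submatrix_mul_le_one ?_ ?_ (rowIdx_mod hℓ i) (colIdx_div hℓ j) _
    fun m hi hj => eq_colIdx_of_mod_of_div hℓ hi hj
  · refine IsBlockDiagonalWrt.list_prod fun M hM => ?_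
    obtain ⟨t, ht, rfl⟩ := List.exists_lt_of_mem_take_ofFn hM
    exact (bflySupp_isBlockDiagonalWrt_mod_of_le _ _ ht hℓ).of_support_subset (hX t)
  · refine IsBlockDiagonalWrt.list_prod fun M hM => ?_
    obtain ⟨t, ht, rfl⟩ := List.exists_le_of_mem_drop_ofFn hM
    exact (bflySupp_isBlockDiagonalWrt_div_of_lt _ _ (by omega)).of_support_subset (hX t)
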